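/- (MPCC-to-bilevel direction.) Under the same setting: θ_f(x,·) convex and C¹, g_j(x,·) convex and C¹, h_i(x,·) affine, and K(x) satisfying the Abadie constraint qualification for every x ∈ X — if (x̄, ȳ, λ̄, μ̄) is an optimal solution of the MPCC (minimize θ_l(x,y) over (x,y,λ,μ) with x ∈ X, ∇_y θ_f(x,y) + Σ_i λ_i ∇_y h_i(x,y) + Σ_j μ_j ∇_y g_j(x,y) = 0, μ_j ≥ 0, μ_j g_j(x,y) = 0 for all j ∈ J, h_i(x,y) = 0 for all i ∈ I, g_j(x,y) ≤ 0 for all j ∈ J), then (x̄, ȳ) is an optimal solution of the bilevel problem: minimize θ_l(x,y) over x ∈ X and y ∈ S(x), where S(x) is the set of minimizers of θ_f(x,·) over K(x). -/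

import Mathlib

/-! For a convex lower level with affine equality constraints, the KKT conditions at `y` are
sufficient for `y` to minimise `θ_f(x, ·)` over `K(x)`, by the gradient inequality. Under the
Abadie constraint qualification they are also necessary: at a minimiser the gradient of `θ_f(x, ·)`
is nonnegative on the Bouligand tangent cone, which is the linearized cone, and Farkas' lemma
turns this into multipliers. So the MPCC feasible set projects onto the bilevel feasible set,
and a minimiser of `θ_l` over the former is a minimiser over the latter. -/

open Filter Topology RealInnerProductSpace

noncomputable section

/-- The Bouligand tangent cone: directions `ν` such that there are sequences `νₖ → ν` and
`tₖ → 0⁺` with `y + tₖ • νₖ ∈ Y` for every `k`. -/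
def bouligandTangentCone {E : Type*} [NormedAddCommGroup E] [InnerProductSpace ℝ E]
    (Y : Set E) (y : E) : Set E :=
  {ν | ∃ (νs : ℕ → E) (t : ℕ → ℝ),
    Tendsto νs atTop (𝓝 ν) ∧ (∀ k, 0 < t k) ∧ Tendsto t atTop (𝓝 0) ∧
    ∀ k, y + t k • νs k ∈ Y}

/-- The lower-level feasible set `K(x)` described by `hᵢ(x,y) = 0` and `gⱼ(x,y) ≤ 0`. -/
def lowerFeasSet {p q : ℕ} {I J : Type*}
    (hI : I → EuclideanSpace ℝ (Fin p) → EuclideanSpace ℝ (Fin q) → ℝ)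
    (gJ : J → EuclideanSpace ℝ (Fin p) → EuclideanSpace ℝ (Fin q) → ℝ)
    (x : EuclideanSpace ℝ (Fin p)) : Set (EuclideanSpace ℝ (Fin q)) :=
  {y | (∀ i, hI i x y = 0) ∧ ∀ j, gJ j x y ≤ 0}

/-- The linearized tangent cone of `K(x)` at `y`, taken with respect to the `y`-variable. -/
def linearizedConeLower {p q : ℕ} {I J : Type*}
    (hI : I → EuclideanSpace ℝ (Fin p) → EuclideanSpace ℝ (Fin q) → ℝ)
    (gJ : J → EuclideanSpace ℝ (Fin p) → EuclideanSpace ℝ (Fin q) → ℝ)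
    (x : EuclideanSpace ℝ (Fin p)) (y : EuclideanSpace ℝ (Fin q)) :
    Set (EuclideanSpace ℝ (Fin q)) :=
  {ν | (∀ i, ⟪gradient (hI i x) y, ν⟫ = 0) ∧
    ∀ j, gJ j x y = 0 → ⟪gradient (gJ j x) y, ν⟫ ≤ 0}

/-- The lower-level solution set `S(x)`: minimizers of `θ_f(x,·)` over `K(x)`. -/
def lowerSolSet {p q : ℕ} {I J : Type*}
    (θf : EuclideanSpace ℝ (Fin p) → EuclideanSpace ℝ (Fin q) → ℝ)
    (hI : I → EuclideanSpace ℝ (Fin p) → EuclideanSpace ℝ (Fin q) → ℝ)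
    (gJ : J → EuclideanSpace ℝ (Fin p) → EuclideanSpace ℝ (Fin q) → ℝ)
    (x : EuclideanSpace ℝ (Fin p)) : Set (EuclideanSpace ℝ (Fin q)) :=
  {y ∈ lowerFeasSet hI gJ x | ∀ y' ∈ lowerFeasSet hI gJ x, θf x y ≤ θf x y'}

/-- Feasibility for the MPCC reformulation: `x ∈ X`, stationarity of the lower-level
Lagrangian in `y`, nonnegativity of `μ`, complementary slackness, and lower-level
feasibility of `(x,y)`. -/
def MPCCFeasible {p q : ℕ} {I J : Type*} [Fintype I] [Fintype J]
    (X : Set (EuclideanSpace ℝ (Fin p)))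
    (θf : EuclideanSpace ℝ (Fin p) → EuclideanSpace ℝ (Fin q) → ℝ)
    (hI : I → EuclideanSpace ℝ (Fin p) → EuclideanSpace ℝ (Fin q) → ℝ)
    (gJ : J → EuclideanSpace ℝ (Fin p) → EuclideanSpace ℝ (Fin q) → ℝ)
    (x : EuclideanSpace ℝ (Fin p)) (y : EuclideanSpace ℝ (Fin q))
    (lam : I → ℝ) (mu : J → ℝ) : Prop :=
  x ∈ X ∧
  gradient (θf x) y + ∑ i, lam i • gradient (hI i x) y
    + ∑ j, mu j • gradient (gJ j x) y = 0 ∧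
  (∀ j, 0 ≤ mu j) ∧ (∀ j, mu j * gJ j x y = 0) ∧
  (∀ i, hI i x y = 0) ∧ (∀ j, gJ j x y ≤ 0)

section Farkas

variable {E : Type*} [NormedAddCommGroup E] [InnerProductSpace ℝ E]

lemma inner_sub_div_smul_left_eq (v w a n : E) :
    ⟪v - (⟪v, n⟫ / ⟪a, n⟫) • a, w⟫ = ⟪v, w - (⟪a, w⟫ / ⟪a, n⟫) • n⟫ := by
  simp only [inner_sub_left, inner_sub_right, real_inner_smul_left, real_inner_smul_right]
  ring

lemma inner_sub_div_smul_eq_zero {a n : E} (h : ⟪a, n⟫ ≠ 0) (w : E) :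
    ⟪a, w - (⟪a, w⟫ / ⟪a, n⟫) • n⟫ = 0 := by
  rw [inner_sub_right, real_inner_smul_right, div_mul_cancel₀ _ h, sub_self]

theorem Finset.exists_nonneg_sum_smul_eq_of_inner_nonpos {ι : Type*} [DecidableEq ι]
    (s : Finset ι) {c : ι → E} {d : E} (h : ∀ ν, (∀ i ∈ s, ⟪c i, ν⟫ ≤ 0) → ⟪d, ν⟫ ≤ 0) :
    ∃ t : ι → ℝ, (∀ i, 0 ≤ t i) ∧ ∑ i ∈ s, t i • c i = d := by
  induction s using Finset.induction_on generalizing c d with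
  | empty =>
    refine ⟨0, fun _ => le_rfl, ?_⟩
    simpa using (real_inner_self_nonpos.mp (h d (by simp))).symm
  | insert a s ha ih =>
    suffices ∃ (t : ι → ℝ) (r : ℝ), (∀ i, 0 ≤ t i) ∧ 0 ≤ r ∧
        r • c a + ∑ i ∈ s, t i • c i = d by
      obtain ⟨t, r, ht, hr, rfl⟩ := this
      refine ⟨Function.update t a r, fun i => ?_, ?_⟩
      · rcases eq_or_ne i a with rfl | hi <;> simp [*]
      · rw [sum_insert ha, Function.update_self]
        congr 1
        exact sum_congr rfl fun i hi => by
          rw [Function.update_of_ne (ne_of_mem_of_not_mem hi ha)]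
    by_cases hs : ∀ ν, (∀ i ∈ s, ⟪c i, ν⟫ ≤ 0) → ⟪d, ν⟫ ≤ 0
    · obtain ⟨t, ht, hsum⟩ := ih hs
      exact ⟨t, 0, ht, le_rfl, by simp [hsum]⟩
    push Not at hs
    obtain ⟨n, hn, hdn⟩ := hs
    have hβ : 0 < ⟪c a, n⟫ := by
      by_contra! hβ
      exact hdn.not_ge (h n (forall_mem_insert .. |>.2 ⟨hβ, hn⟩))
    -- Fourier–Motzkin step: project along `c a` onto `⟪·, n⟫ = 0`; the adjoint projection,
    -- along `n` onto `⟪c a, ·⟫ = 0`, carries the hypothesis over to `s`.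
    set proj : E → E := fun v => v - (⟪v, n⟫ / ⟪c a, n⟫) • c a
    obtain ⟨t, ht, hsum⟩ := ih (c := proj ∘ c) (d := proj d) fun w hw => by
      have := h (w - (⟪c a, w⟫ / ⟪c a, n⟫) • n) <| (forall_mem_insert ..).2
        ⟨(inner_sub_div_smul_eq_zero hβ.ne' w).le, fun i hi => by
          simpa [proj, inner_sub_div_smul_left_eq] using hw i hi⟩
      simpa [proj, inner_sub_div_smul_left_eq] using this
    refine ⟨t, ⟪d, n⟫ / ⟪c a, n⟫ - ∑ i ∈ s, t i * (⟪c i, n⟫ / ⟪c a, n⟫), ht, ?_, ?_⟩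
    · have := sum_nonpos fun i hi => mul_nonpos_of_nonneg_of_nonpos (ht i)
        (div_nonpos_of_nonpos_of_nonneg (hn i hi) hβ.le)
      linarith [div_pos hdn hβ]
    · simp only [proj, Function.comp_apply, smul_sub, sum_sub_distrib, smul_smul] at hsum
      rw [sub_smul, sum_smul]
      linear_combination (norm := module) hsum

theorem exists_multipliers_of_forall_inner_nonneg {I J : Type*} [Fintype I] [Fintype J]
    {f : E} {a : I → E} {b : J → E} {A : Set J}
    (h : ∀ ν, (∀ i, ⟪a i, ν⟫ = 0) → (∀ j ∈ A, ⟪b j, ν⟫ ≤ 0) → 0 ≤ ⟪f, ν⟫) :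
    ∃ (lam : I → ℝ) (mu : J → ℝ), (∀ j, 0 ≤ mu j) ∧ (∀ j ∉ A, mu j = 0) ∧
      f + ∑ i, lam i • a i + ∑ j, mu j • b j = 0 := by
  classical
  -- An equality constraint is a pair of opposite inequalities; inactive ones get the generator `0`.
  let c : I ⊕ I ⊕ J → E :=
    Sum.elim a (Sum.elim (fun i => -a i) fun j => if j ∈ A then b j else 0)
  obtain ⟨t, ht, hsum⟩ :=
    Finset.univ.exists_nonneg_sum_smul_eq_of_inner_nonpos (c := c) (d := -f) fun ν hν => by
      have := h ν
        (fun i => le_antisymm (hν (.inl i) (Finset.mem_univ _))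
          (by simpa [c] using hν (.inr (.inl i)) (Finset.mem_univ _)))
        (fun j hj => by simpa [c, hj] using hν (.inr (.inr j)) (Finset.mem_univ _))
      simpa [inner_neg_left] using this
  refine ⟨fun i => t (.inl i) - t (.inr (.inl i)), fun j => if j ∈ A then t (.inr (.inr j)) else 0,
    fun j => ite_nonneg (ht _) le_rfl, fun j hj => if_neg hj, ?_⟩
  have hb : ∑ j, (if j ∈ A then t (.inr (.inr j)) else 0) • b j =
      ∑ j, t (.inr (.inr j)) • if j ∈ A then b j else 0 :=
    Finset.sum_congr rfl fun j _ => by split_ifs <;> simp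
  rw [Fintype.sum_sum_type, Fintype.sum_sum_type] at hsum
  simp only [c, Sum.elim_inl, Sum.elim_inr, smul_neg, Finset.sum_neg_distrib] at hsum
  simp only [hb, sub_smul, Finset.sum_sub_distrib]
  linear_combination (norm := module) hsum

end Farkas

section FirstOrder

variable {E : Type*} [NormedAddCommGroup E] [InnerProductSpace ℝ E]

theorem bouligandTangentCone_subset_posTangentConeAt (Y : Set E) (y : E) :
    bouligandTangentCone Y y ⊆ posTangentConeAt Y y := by
  rintro ν ⟨νs, t, hνs, ht, ht0, hmem⟩
  refine mem_tangentConeAt_of_seq atTop (fun k => (t k)⁻¹.toNNReal)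
    (fun k => t k • νs k) ?_ (.of_forall hmem) (hνs.congr fun k => ?_)
  · simpa using ht0.smul hνs
  · rw [NNReal.smul_def, Real.coe_toNNReal _ (inv_pos.2 (ht k)).le, smul_smul,
      inv_mul_cancel₀ (ht k).ne', one_smul]

theorem IsMinOn.inner_gradient_nonneg [CompleteSpace E] {f : E → ℝ} {Y : Set E} {y ν f' : E}
    (h : IsMinOn f Y y) (hf : HasGradientAt f f' y) (hν : ν ∈ bouligandTangentCone Y y) :
    0 ≤ ⟪f', ν⟫ := by
  simpa using h.localize.hasFDerivWithinAt_nonneg hf.hasFDerivAt.hasFDerivWithinAt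
    (bouligandTangentCone_subset_posTangentConeAt Y y hν)

theorem ConvexOn.inner_gradient_le_sub [CompleteSpace E] {s : Set E} {f : E → ℝ} {f' y z : E}
    (hf : ConvexOn ℝ s f) (hy : y ∈ s) (hz : z ∈ s) (hg : HasGradientAt f f' y) :
    ⟪f', z - y⟫ ≤ f z - f y := by
  have hline : HasDerivAt (f ∘ AffineMap.lineMap (k := ℝ) y z) ⟪f', z - y⟫ 0 := by
    have hfd : HasFDerivAt f (InnerProductSpace.toDual ℝ E f')
        (AffineMap.lineMap (k := ℝ) y z 0) := by
      simpa using hg.hasFDerivAt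
    simpa using hfd.comp_hasDerivAt 0 (AffineMap.lineMap (k := ℝ) y z).hasDerivAt
  simpa [slope] using
    (hf.comp_affineMap (AffineMap.lineMap (k := ℝ) y z)).le_slope_of_hasDerivAt
      (by simpa using hy) (by simpa using hz) one_pos hline

theorem inner_gradient_eq_sub_of_eq_add_const [FiniteDimensional ℝ E] {h : E → ℝ}
    (φ : E →ₗ[ℝ] ℝ) (c : ℝ) (hh : ∀ y, h y = φ y + c) (y z : E) :
    ⟪gradient h y, z - y⟫ = h z - h y := by
  let φ' := LinearMap.toContinuousLinearMap φ
  have hφ' : HasGradientAt h ((InnerProductSpace.toDual ℝ E).symm φ') y := by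
    rw [show h = fun v => φ' v + c from funext hh]
    exact (φ'.hasFDerivAt.add_const c).hasGradientAt
  rw [hφ'.gradient]
  simp [φ', hh]

end FirstOrder

section KKT

variable {p q : ℕ} {I J : Type*} [Fintype I] [Fintype J] {X : Set (EuclideanSpace ℝ (Fin p))}
  {θf : EuclideanSpace ℝ (Fin p) → EuclideanSpace ℝ (Fin q) → ℝ}
  {hI : I → EuclideanSpace ℝ (Fin p) → EuclideanSpace ℝ (Fin q) → ℝ}
  {gJ : J → EuclideanSpace ℝ (Fin p) → EuclideanSpace ℝ (Fin q) → ℝ}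
  {x : EuclideanSpace ℝ (Fin p)} {y : EuclideanSpace ℝ (Fin q)}

theorem MPCCFeasible.mem_lowerSolSet {lam : I → ℝ} {mu : J → ℝ}
    (hθf : ConvexOn ℝ Set.univ (θf x)) (hθd : DifferentiableAt ℝ (θf x) y)
    (hg : ∀ j, ConvexOn ℝ Set.univ (gJ j x)) (hgd : ∀ j, DifferentiableAt ℝ (gJ j x) y)
    (hh : ∀ i, ∃ (φ : EuclideanSpace ℝ (Fin q) →ₗ[ℝ] ℝ) (c : ℝ), ∀ y, hI i x y = φ y + c)
    (h : MPCCFeasible X θf hI gJ x y lam mu) : y ∈ lowerSolSet θf hI gJ x := by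
  obtain ⟨-, hstat, hmu, hcs, hhy, hgy⟩ := h
  refine ⟨⟨hhy, hgy⟩, fun z hz => ?_⟩
  have hθ := hθf.inner_gradient_le_sub (Set.mem_univ y) (Set.mem_univ z) hθd.hasGradientAt
  have hhz : ∀ i, ⟪gradient (hI i x) y, z - y⟫ = 0 := fun i => by
    obtain ⟨φ, c, hφ⟩ := hh i
    rw [inner_gradient_eq_sub_of_eq_add_const φ c hφ, hz.1 i, hhy i, sub_zero]
  have hgz : ∀ j, mu j * ⟪gradient (gJ j x) y, z - y⟫ ≤ 0 := fun j => calc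
    mu j * ⟪gradient (gJ j x) y, z - y⟫ ≤ mu j * (gJ j x z - gJ j x y) :=
      mul_le_mul_of_nonneg_left
        ((hg j).inner_gradient_le_sub (Set.mem_univ y) (Set.mem_univ z) (hgd j).hasGradientAt)
        (hmu j)
    _ = mu j * gJ j x z := by rw [mul_sub, hcs j, sub_zero]
    _ ≤ 0 := mul_nonpos_of_nonneg_of_nonpos (hmu j) (hz.2 j)
  have hstat_dir := congrArg (⟪·, z - y⟫) hstat
  simp only [inner_add_left, sum_inner, real_inner_smul_left, hhz, mul_zero,
    Finset.sum_const_zero, add_zero, inner_zero_left] at hstat_dir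
  linarith [Finset.sum_nonpos (s := Finset.univ) fun j _ => hgz j]

theorem exists_MPCCFeasible_of_mem_lowerSolSet (hx : x ∈ X)
    (hθd : DifferentiableAt ℝ (θf x) y)
    (hCQ : linearizedConeLower hI gJ x y ⊆ bouligandTangentCone (lowerFeasSet hI gJ x) y)
    (hy : y ∈ lowerSolSet θf hI gJ x) :
    ∃ (lam : I → ℝ) (mu : J → ℝ), MPCCFeasible X θf hI gJ x y lam mu := by
  obtain ⟨⟨hhy, hgy⟩, hmin⟩ := hy
  obtain ⟨lam, mu, hmu, hmu_inactive, hstat⟩ :=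
    exists_multipliers_of_forall_inner_nonneg (A := {j | gJ j x y = 0}) fun ν hνh hνg =>
      (isMinOn_iff.2 hmin).inner_gradient_nonneg hθd.hasGradientAt (hCQ ⟨hνh, hνg⟩)
  refine ⟨lam, mu, hx, hstat, hmu, fun j => ?_, hhy, hgy⟩
  by_cases hj : gJ j x y = 0
  · rw [hj, mul_zero]
  · rw [hmu_inactive j hj, zero_mul]

end KKT

theorem MPCC_to_bilevel_general {p q : ℕ} {I J : Type*} [Fintype I] [Fintype J]
    (X : Set (EuclideanSpace ℝ (Fin p)))
    (θl θf : EuclideanSpace ℝ (Fin p) → EuclideanSpace ℝ (Fin q) → ℝ)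
    (hI : I → EuclideanSpace ℝ (Fin p) → EuclideanSpace ℝ (Fin q) → ℝ)
    (gJ : J → EuclideanSpace ℝ (Fin p) → EuclideanSpace ℝ (Fin q) → ℝ)
    (hθf : ∀ x ∈ X, ConvexOn ℝ Set.univ (θf x) ∧ ContDiff ℝ 1 (θf x))
    (hg : ∀ x ∈ X, ∀ j, ConvexOn ℝ Set.univ (gJ j x) ∧ ContDiff ℝ 1 (gJ j x))
    (hh : ∀ x ∈ X, ∀ i, ∃ (φ : EuclideanSpace ℝ (Fin q) →ₗ[ℝ] ℝ) (c : ℝ),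
      ∀ y, hI i x y = φ y + c)
    (hCQ : ∀ x ∈ X, ∀ y ∈ lowerFeasSet hI gJ x,
      bouligandTangentCone (lowerFeasSet hI gJ x) y = linearizedConeLower hI gJ x y)
    (xbar : EuclideanSpace ℝ (Fin p)) (ybar : EuclideanSpace ℝ (Fin q))
    (lambar : I → ℝ) (mubar : J → ℝ)
    (hfeas : MPCCFeasible X θf hI gJ xbar ybar lambar mubar)
    (hopt : ∀ (x : EuclideanSpace ℝ (Fin p)) (y : EuclideanSpace ℝ (Fin q))
      (lam : I → ℝ) (mu : J → ℝ),
      MPCCFeasible X θf hI gJ x y lam mu → θl xbar ybar ≤ θl x y) :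
    (xbar ∈ X ∧ ybar ∈ lowerSolSet θf hI gJ xbar) ∧
    ∀ x ∈ X, ∀ y ∈ lowerSolSet θf hI gJ x, θl xbar ybar ≤ θl x y := by
  have hdiff {f : EuclideanSpace ℝ (Fin q) → ℝ} (hf : ContDiff ℝ 1 f) (y) :
      DifferentiableAt ℝ f y :=
    hf.differentiable one_ne_zero y
  have hxbar := hfeas.1
  refine ⟨⟨hxbar, ?_⟩, fun x hx y hy => ?_⟩
  · exact hfeas.mem_lowerSolSet (hθf _ hxbar).1 (hdiff (hθf _ hxbar).2 _)
      (fun j => (hg _ hxbar j).1) (fun j => hdiff (hg _ hxbar j).2 _) (hh _ hxbar)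
  · obtain ⟨lam, mu, h⟩ := exists_MPCCFeasible_of_mem_lowerSolSet hx
      (hdiff (hθf x hx).2 y) (hCQ x hx y hy.1).ge hy
    exact hopt x y lam mu h

/-- MPCC-to-bilevel: under convexity of the lower level and the Abadie CQ for `K(x)` at every
feasible point, if `(x̄, ȳ, λ̄, μ̄)` is an optimal solution of the MPCC reformulation, then
`(x̄, ȳ)` is an optimal solution of the optimistic bilevel problem. -/
theorem MPCC_to_bilevel {p q : ℕ} {I J : Type*} [Fintype I] [Fintype J]
    (X : Set (EuclideanSpace ℝ (Fin p)))
    (θl θf : EuclideanSpace ℝ (Fin p) → EuclideanSpace ℝ (Fin q) → ℝ)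
    (hI : I → EuclideanSpace ℝ (Fin p) → EuclideanSpace ℝ (Fin q) → ℝ)
    (gJ : J → EuclideanSpace ℝ (Fin p) → EuclideanSpace ℝ (Fin q) → ℝ)
    (hθf : ∀ x ∈ X, ConvexOn ℝ Set.univ (θf x) ∧ ContDiff ℝ 1 (θf x))
    (hg : ∀ x ∈ X, ∀ j, ConvexOn ℝ Set.univ (gJ j x) ∧ ContDiff ℝ 1 (gJ j x))
    (hh : ∀ x ∈ X, ∀ i, ∃ (φ : EuclideanSpace ℝ (Fin q) →ₗ[ℝ] ℝ) (c : ℝ),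
      ∀ y, hI i x y = φ y + c)
    (hKne : ∀ x ∈ X, (lowerFeasSet hI gJ x).Nonempty)
    (hKcpt : ∀ x ∈ X, IsCompact (lowerFeasSet hI gJ x))
    (hCQ : ∀ x ∈ X, ∀ y ∈ lowerFeasSet hI gJ x,
      bouligandTangentCone (lowerFeasSet hI gJ x) y = linearizedConeLower hI gJ x y)
    (xbar : EuclideanSpace ℝ (Fin p)) (ybar : EuclideanSpace ℝ (Fin q))
    (lambar : I → ℝ) (mubar : J → ℝ)
    (hfeas : MPCCFeasible X θf hI gJ xbar ybar lambar mubar)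
    (hopt : ∀ (x : EuclideanSpace ℝ (Fin p)) (y : EuclideanSpace ℝ (Fin q))
      (lam : I → ℝ) (mu : J → ℝ),
      MPCCFeasible X θf hI gJ x y lam mu → θl xbar ybar ≤ θl x y) :
    (xbar ∈ X ∧ ybar ∈ lowerSolSet θf hI gJ xbar) ∧
    ∀ x ∈ X, ∀ y ∈ lowerSolSet θf hI gJ x, θl xbar ybar ≤ θl x y :=
  MPCC_to_bilevel_general X θl θf hI gJ hθf hg hh hCQ xbar ybar lambar mubar hfeas hopt
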